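/- Define P(t) = k₄‖H r₁(t)‖₁ - (H r₁(t))ᵀ h_B(t) + ∫_{t₀}^t e^{-λ_P(t-τ)} [ (H r₁(τ))ᵀ ḣ_B(τ) + (k₂-λ_P)( k₄‖H r₁(τ)‖₁ - (H r₁(τ))ᵀ h_B(τ) ) ] dτ. If ‖h_B(t)‖ ≤ χ₁, ‖ḣ_B(t)‖ ≤ χ₂ for all t, 0 < λ_P < k₂, and k₄ > χ₁ + χ₂/(k₂ - λ_P), then P(t) ≥ 0 for all t ∈ [t₀, t₁]. -/
import Mathlib


open Matrix

lemma dot_le_l1_l2 {m : ℕ} (x y : Fin m → ℝ) :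
    |x ⬝ᵥ y| ≤ (∑ i, |x i|) * Real.sqrt (∑ i, (y i) ^ 2) := by
  have h1 : |x ⬝ᵥ y| ≤ ∑ i, |x i| * |y i| := by
    refine le_trans (Finset.abs_sum_le_sum_abs _ _) ?_
    exact le_of_eq (Finset.sum_congr rfl fun i _ => abs_mul _ _)
  refine h1.trans ?_
  rw [Finset.sum_mul]
  refine Finset.sum_le_sum fun i _ => ?_
  have hyi : |y i| ≤ Real.sqrt (∑ j, (y j) ^ 2) := by
    rw [← Real.sqrt_sq_eq_abs]
    refine Real.sqrt_le_sqrt ?_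
    exact Finset.single_le_sum (f := fun j => (y j) ^ 2)
      (fun j _ => sq_nonneg _) (Finset.mem_univ i)
  exact mul_le_mul_of_nonneg_left hyi (abs_nonneg _)

/-- Proposition 1: the P-function is nonnegative under the stated gain conditions. -/
theorem P_function_nonneg {m : ℕ} (H : Matrix (Fin m) (Fin m) ℝ)
    {t₀ t₁ : ℝ} (ht : t₀ ≤ t₁)
    (r₁ hB hB' : ℝ → Fin m → ℝ)
    (hr₁ : ∀ i, ContinuousOn (fun t => r₁ t i) (Set.Icc t₀ t₁))
    (hder : ∀ t i, HasDerivAt (fun s => hB s i) (hB' t i) t)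
    (k₂ lamP χ₁ χ₂ k₄ : ℝ)
    (hχ₁ : ∀ t, Real.sqrt (∑ i, (hB t i) ^ 2) ≤ χ₁)
    (hχ₂ : ∀ t, Real.sqrt (∑ i, (hB' t i) ^ 2) ≤ χ₂)
    (hlam : 0 < lamP) (hk₂ : lamP < k₂)
    (hk₄ : χ₁ + χ₂ / (k₂ - lamP) < k₄)
    (P : ℝ → ℝ)
    (hP : ∀ t, P t =
      k₄ * (∑ i, |H.mulVec (r₁ t) i|) - (H.mulVec (r₁ t)) ⬝ᵥ (hB t) +
        ∫ τ in t₀..t, Real.exp (-lamP * (t - τ)) *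
          ((H.mulVec (r₁ τ)) ⬝ᵥ (hB' τ) +
            (k₂ - lamP) * (k₄ * (∑ i, |H.mulVec (r₁ τ) i|) -
              (H.mulVec (r₁ τ)) ⬝ᵥ (hB τ)))) :
    ∀ t ∈ Set.Icc t₀ t₁, 0 ≤ P t := by
  have hχ₁0 : 0 ≤ χ₁ := le_trans (Real.sqrt_nonneg _) (hχ₁ t₀)
  have hχ₂0 : 0 ≤ χ₂ := le_trans (Real.sqrt_nonneg _) (hχ₂ t₀)
  have hkl : 0 < k₂ - lamP := by linarith
  have hk₄' : χ₂ ≤ (k₂ - lamP) * (k₄ - χ₁) := by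
    have := (div_le_iff₀ hkl).mp (le_of_lt (by linarith : χ₂ / (k₂ - lamP) < k₄ - χ₁))
    linarith [this]
  -- pointwise bound on the first part
  have key : ∀ s : ℝ, 0 ≤ k₄ * (∑ i, |H.mulVec (r₁ s) i|) - (H.mulVec (r₁ s)) ⬝ᵥ (hB s) := by
    intro s
    set A := ∑ i, |H.mulVec (r₁ s) i| with hA
    have hA0 : 0 ≤ A := Finset.sum_nonneg fun i _ => abs_nonneg _
    have hd : |(H.mulVec (r₁ s)) ⬝ᵥ (hB s)| ≤ A * χ₁ := by
      refine (dot_le_l1_l2 _ _).trans ?_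
      exact mul_le_mul_of_nonneg_left (hχ₁ s) hA0
    have := (abs_le.mp hd).2
    have hk₄χ : χ₁ ≤ k₄ := by nlinarith [div_nonneg hχ₂0 hkl.le]
    nlinarith
  intro t htmem
  rw [hP t]
  have hint : 0 ≤ ∫ τ in t₀..t, Real.exp (-lamP * (t - τ)) *
      ((H.mulVec (r₁ τ)) ⬝ᵥ (hB' τ) +
        (k₂ - lamP) * (k₄ * (∑ i, |H.mulVec (r₁ τ) i|) -
          (H.mulVec (r₁ τ)) ⬝ᵥ (hB τ))) := by
    refine intervalIntegral.integral_nonneg htmem.1 fun τ _ => ?_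
    refine mul_nonneg (Real.exp_nonneg _) ?_
    set A := ∑ i, |H.mulVec (r₁ τ) i| with hA
    have hA0 : 0 ≤ A := Finset.sum_nonneg fun i _ => abs_nonneg _
    have hd' : |(H.mulVec (r₁ τ)) ⬝ᵥ (hB' τ)| ≤ A * χ₂ := by
      refine (dot_le_l1_l2 _ _).trans ?_
      exact mul_le_mul_of_nonneg_left (hχ₂ τ) hA0
    have hd : |(H.mulVec (r₁ τ)) ⬝ᵥ (hB τ)| ≤ A * χ₁ := by
      refine (dot_le_l1_l2 _ _).trans ?_
      exact mul_le_mul_of_nonneg_left (hχ₁ τ) hA0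
    have h1 := (abs_le.mp hd').1
    have h2 := (abs_le.mp hd).2
    nlinarith [key τ, mul_le_mul_of_nonneg_left hk₄' hA0]
  linarith [key t]
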